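/- arXiv:2310.07340 — 4 statements merged into one kernel-verified Lean document; each statement's English description precedes it below -/
import Mathlib

section
/- Let F : ℝⁿ × ℝ → ℝ be continuous with F(x,t) = F₀(x) + t·G(x,t), where G is continuous, G(0,t) = 0 for all t near 0, and F₀(0) = 0. If the image of F₀ contains an interval [0, ε₀) for points in every small ball around 0 ∈ ℝⁿ, then for every r > 0 there exist ε > 0 and η > 0 such that the image F(B_r) of the ball B_r ⊂ ℝⁿ × ℝ of radius r contains [0, ε) × (−η, η). -/
open Filter Metric Set Topology

/-- If `F(x,t) = F₀(x) + t·G(x,t)` with `F`, `G`, `F₀` continuous,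
`G(0,t) = 0` for `t` near `0`, `F₀(0) = 0`, and the image of every small ball under `F₀`
contains an interval `[0, ε₀)`, then for every `r > 0` there are `ε, η > 0` such that
`F(B_r) ⊇ [0, ε) × (−η, η)`. -/
theorem stmt_0 (n : ℕ) (F : (Fin n → ℝ) × ℝ → ℝ) (F₀ : (Fin n → ℝ) → ℝ)
    (G : (Fin n → ℝ) × ℝ → ℝ)
    (hF : Continuous F) (hF₀ : Continuous F₀) (hG : Continuous G)
    (hFG : ∀ x t, F (x, t) = F₀ x + t * G (x, t))
    (hG0 : ∀ᶠ t in 𝓝 (0 : ℝ), G (0, t) = 0)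
    (hF₀0 : F₀ 0 = 0)
    (him : ∀ r' > (0 : ℝ), ∃ ε₀ > (0 : ℝ), Set.Ico 0 ε₀ ⊆ F₀ '' Metric.ball 0 r') :
    ∀ r > (0 : ℝ), ∃ ε > (0 : ℝ), ∃ η > (0 : ℝ), ∀ α β : ℝ,
      α ∈ Set.Ico (0 : ℝ) ε → |β| < η →
      ∃ x : Fin n → ℝ, (x, β) ∈ Metric.ball (0 : (Fin n → ℝ) × ℝ) r ∧ F (x, β) = α := by
  intro r hr
  obtain ⟨ε₀, hε₀, himr⟩ := him r hr
  set c : ℝ := ε₀ / 2 with hc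
  have hcpos : 0 < c := by positivity
  obtain ⟨x₁, hx₁ball, hx₁⟩ := himr ⟨le_of_lt hcpos, by linarith [half_lt_self hε₀]⟩
  -- continuity of β ↦ β * G (x₁, β) at 0
  have hcont : Filter.Tendsto (fun β : ℝ => β * G (x₁, β)) (𝓝 0) (𝓝 0) := by
    have : Continuous (fun β : ℝ => β * G (x₁, β)) :=
      continuous_id.mul (hG.comp (Continuous.prodMk_right x₁))
    have h := this.tendsto 0
    simpa using h
  have hsmall : ∀ᶠ β : ℝ in 𝓝 0, |β * G (x₁, β)| < c / 2 := by
    have : ∀ᶠ y : ℝ in 𝓝 0, |y| < c / 2 := by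
      have : Set.Ioo (-(c/2)) (c/2) ∈ 𝓝 (0:ℝ) :=
        Ioo_mem_nhds (by linarith) (by linarith)
      filter_upwards [this] with y hy
      rw [abs_lt]; exact ⟨hy.1, hy.2⟩
    exact hcont.eventually this
  have hr' : ∀ᶠ β : ℝ in 𝓝 0, |β| < r := by
    have : Set.Ioo (-r) r ∈ 𝓝 (0:ℝ) := Ioo_mem_nhds (by linarith) hr
    filter_upwards [this] with y hy
    rw [abs_lt]; exact ⟨hy.1, hy.2⟩
  obtain ⟨δ, hδpos, hδ⟩ := Metric.eventually_nhds_iff.mp ((hsmall.and hr').and hG0)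
  refine ⟨c / 2, by positivity, δ, hδpos, ?_⟩
  intro α β hα hβ
  have hβ' := hδ (by simpa [Real.dist_eq] using hβ)
  obtain ⟨⟨hβ1, hβ2⟩, hβ3⟩ := hβ'
  set g : ℝ → ℝ := fun t => F (t • x₁, β) with hg
  have hgc : Continuous g :=
    hF.comp ((continuous_id.smul continuous_const).prodMk continuous_const)
  have hg0 : g 0 = 0 := by
    simp only [hg, zero_smul]
    rw [hFG, hF₀0, hβ3]
    ring
  have hg1 : c / 2 ≤ g 1 := by
    simp only [hg, one_smul]
    rw [hFG, hx₁]
    have := abs_lt.mp hβ1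
    linarith [this.1]
  have hmem : α ∈ Set.Icc (g 0) (g 1) := ⟨by rw [hg0]; exact hα.1, le_trans (le_of_lt hα.2) hg1⟩
  obtain ⟨t, ht, hgt⟩ := intermediate_value_Icc (by norm_num : (0:ℝ) ≤ 1) hgc.continuousOn hmem
  refine ⟨t • x₁, ?_, hgt⟩
  rw [Metric.mem_ball, Prod.dist_eq]
  refine max_lt ?_ (by simpa [Real.dist_eq] using hβ2)
  simp only [Prod.fst_zero]
  rw [dist_zero_right, norm_smul]
  calc ‖t‖ * ‖x₁‖ ≤ 1 * ‖x₁‖ := by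
        apply mul_le_mul_of_nonneg_right _ (norm_nonneg _)
        rw [Real.norm_eq_abs, abs_le]; exact ⟨by linarith [ht.1], ht.2⟩
    _ < r := by rw [one_mul, ← dist_zero_right]; simpa [dist_comm] using hx₁ball
end

section
/- Let x : [0, ε) → ℝⁿ be a real analytic path and let h be a real analytic function germ at x(0) with h(x(0)) = 0 and ∂h/∂xᵢ(x(0)) = 0 for all i = 1, …, n. Then the order of vanishing in s of the function s ↦ h(x(s)) at s = 0 is strictly greater than the minimum over i of the orders of vanishing of s ↦ (∂h/∂xᵢ)(x(s)) at s = 0. -/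
/-!
By the chain rule `(h ∘ x)' = ∑ᵢ xᵢ' · (∂ᵢh ∘ x)`. By the Leibniz rule, multiplying by the smooth
factor `xᵢ'` cannot lower the order of vanishing of `∂ᵢh ∘ x`, so `(h ∘ x)'` vanishes to order `k`
whenever every `∂ᵢh ∘ x` does; since `h (x 0) = 0`, `h ∘ x` then vanishes to order `k + 1`.
-/

open Filter Metric Set Topology

/-- `ordGE g k` says the order of vanishing at `0` of `g : ℝ → ℝ` is at least `k`,
i.e. the first `k` Taylor coefficients at `0` vanish. -/
def ordGE (g : ℝ → ℝ) (k : ℕ) : Prop := ∀ i < k, iteratedDeriv i g 0 = 0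

namespace ordGE

variable {f g : ℝ → ℝ} {k : ℕ}

theorem congr (hg : ordGE g k) (hfg : g =ᶠ[𝓝 0] f) : ordGE f k :=
  fun i hi => hfg.iteratedDeriv_eq i ▸ hg i hi

theorem succ_of_deriv (h0 : g 0 = 0) (hg : ordGE (deriv g) k) : ordGE g (k + 1)
  | 0, _ => by simpa using h0
  | i + 1, hi => by rw [iteratedDeriv_succ']; exact hg i (by omega)

theorem mul_left (hf : ContDiffAt ℝ k f 0) (hg : ContDiffAt ℝ k g 0) (hg0 : ordGE g k) :
    ordGE (fun s => f s * g s) k := by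
  intro i hi
  have hik : (i : WithTop ℕ∞) ≤ k := by exact_mod_cast hi.le
  rw [iteratedDeriv_fun_mul (hf.of_le hik) (hg.of_le hik)]
  exact Finset.sum_eq_zero fun j _ => by rw [hg0 (i - j) (by omega), mul_zero]

theorem fun_sum {ι : Type*} (t : Finset ι) {g : ι → ℝ → ℝ}
    (hg : ∀ j ∈ t, ContDiffAt ℝ k (g j) 0) (hg0 : ∀ j ∈ t, ordGE (g j) k) :
    ordGE (fun s => ∑ j ∈ t, g j s) k := by
  intro i hi
  have hik : (i : WithTop ℕ∞) ≤ k := by exact_mod_cast hi.le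
  rw [iteratedDeriv_fun_sum fun j hj => (hg j hj).of_le hik]
  exact Finset.sum_eq_zero fun j hj => hg0 j hj i hi

end ordGE

theorem HasDerivAt.comp_sum_partials {ι : Type*} [Fintype ι] [DecidableEq ι]
    {x : ℝ → ι → ℝ} {x' : ι → ℝ} {h : (ι → ℝ) → ℝ} {s : ℝ}
    (hx : HasDerivAt x x' s) (hh : DifferentiableAt ℝ h (x s)) :
    HasDerivAt (fun t => h (x t)) (∑ i, x' i * fderiv ℝ h (x s) (Pi.single i 1)) s := by
  have hexpand : fderiv ℝ h (x s) x' = ∑ i, x' i * fderiv ℝ h (x s) (Pi.single i 1) := by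
    conv_lhs => rw [← Finset.univ_sum_single x']
    simp_rw [map_sum]
    refine Finset.sum_congr rfl fun i _ => ?_
    rw [← smul_eq_mul, ← map_smul, ← Pi.single_smul, smul_eq_mul, mul_one]
  exact hexpand ▸ hh.hasFDerivAt.comp_hasDerivAt s hx

theorem stmt_2_general (n : ℕ) (x : ℝ → (Fin n → ℝ)) (hx : AnalyticAt ℝ x 0)
    (h : (Fin n → ℝ) → ℝ) (hh : AnalyticAt ℝ h (x 0))
    (h0 : h (x 0) = 0) :
    ∀ k : ℕ,
      (∀ i : Fin n, ordGE (fun s => fderiv ℝ h (x s) (Pi.single i 1)) k) →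
      ordGE (fun s => h (x s)) (k + 1) := by
  intro k hk
  have hpartial (i : Fin n) : ContDiffAt ℝ k (fun s => fderiv ℝ h (x s) (Pi.single i 1)) 0 :=
    (hh.fderiv.comp hx).contDiffAt.clm_apply contDiffAt_const
  have hvelocity (i : Fin n) : ContDiffAt ℝ k (fun s => deriv x s i) 0 :=
    contDiffAt_pi.1 hx.deriv.contDiffAt i
  have hchain : deriv (fun s => h (x s)) =ᶠ[𝓝 0]
      fun s => ∑ i, deriv x s i * fderiv ℝ h (x s) (Pi.single i 1) := by
    filter_upwards [hx.eventually_analyticAt,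
      hx.continuousAt.eventually hh.eventually_analyticAt] with s hxs hhs
    exact (hxs.differentiableAt.hasDerivAt.comp_sum_partials hhs.differentiableAt).deriv
  refine ordGE.succ_of_deriv h0 (ordGE.congr ?_ hchain.symm)
  exact ordGE.fun_sum _ (fun i _ => (hvelocity i).mul (hpartial i))
    fun i _ => ordGE.mul_left (hvelocity i) (hpartial i) (hk i)

/-- If `x` is a real analytic path, `h` is a real analytic germ at `x 0`
with `h (x 0) = 0` and all partial derivatives of `h` vanishing at `x 0`, then
`ord_s h(x(s)) > minᵢ ord_s ∂ᵢh(x(s))`: whenever all the compositions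
`s ↦ ∂ᵢh(x(s))` have order `≥ k`, the composition `s ↦ h(x(s))` has order `≥ k + 1`. -/
theorem stmt_2 (n : ℕ) (x : ℝ → (Fin n → ℝ)) (hx : AnalyticAt ℝ x 0)
    (h : (Fin n → ℝ) → ℝ) (hh : AnalyticAt ℝ h (x 0))
    (h0 : h (x 0) = 0)
    (hd : ∀ i : Fin n, fderiv ℝ h (x 0) (Pi.single i 1) = 0) :
    ∀ k : ℕ,
      (∀ i : Fin n, ordGE (fun s => fderiv ℝ h (x s) (Pi.single i 1)) k) →
      ordGE (fun s => h (x s)) (k + 1) :=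
  stmt_2_general n x hx h hh h0
end

section
/- Let F : 𝕂ⁿ × 𝕂 → 𝕂 be analytic near 0 with F(0, t) = 0 for all small t, and suppose Sing F̃ ∩ {t = 0} ⊆ F₀^{-1}(0) as germs, where F̃(x,t) = (F(x,t), t). Then for every δ > 0 and r > 0 small enough there exists η > 0 such that the discriminant Δ = F̃(Sing F̃ ∩ B̄_r) satisfies Δ ∩ (∂D_δ × D_η) = ∅, where ∂D_δ = {s ∈ 𝕂 : |s| = δ} and D_η = {t : |t| < η}. -/
open Filter Metric Set Topology

/-- Let `F : 𝕂ⁿ × 𝕂 → 𝕂` be analytic on an open neighbourhood `Ω` of `0`,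
with `F(0,t) = 0` for small `t`, and suppose as germs `Sing F̃ ∩ {t = 0} ⊆ F₀⁻¹(0)`, where
`Sing F̃ = {(x,t) : ∂F/∂xᵢ(x,t) = 0 ∀ i}`.  Then for every small enough `r > 0` and every
`δ > 0` there is `η > 0` such that the discriminant `Δ = F̃(Sing F̃ ∩ B̄_r)` misses
`∂D_δ × D_η`: no point of `Sing F̃ ∩ B̄_r` with `|t| < η` has `|F| = δ`. -/
theorem stmt_14 {𝕜 : Type*} [RCLike 𝕜] (n : ℕ)
    (F : (Fin n → 𝕜) × 𝕜 → 𝕜)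
    (Ω : Set ((Fin n → 𝕜) × 𝕜)) (hΩ : IsOpen Ω) (hΩ0 : (0 : (Fin n → 𝕜) × 𝕜) ∈ Ω)
    (hF : AnalyticOnNhd 𝕜 F Ω)
    (hF0t : ∀ᶠ t in 𝓝 (0 : 𝕜), F (0, t) = 0)
    (hsing : ∀ᶠ p in 𝓝 (0 : (Fin n → 𝕜) × 𝕜),
      (p.2 = 0 ∧ ∀ i, fderiv 𝕜 F p (Pi.single i 1, 0) = 0) → F p = 0) :
    ∃ r₀ > (0 : ℝ), Metric.closedBall (0 : (Fin n → 𝕜) × 𝕜) r₀ ⊆ Ω ∧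
      ∀ r, 0 < r → r ≤ r₀ → ∀ δ > (0 : ℝ), ∃ η > (0 : ℝ),
        ∀ p : (Fin n → 𝕜) × 𝕜, p ∈ Metric.closedBall 0 r →
          (∀ i, fderiv 𝕜 F p (Pi.single i 1, 0) = 0) → ‖p.2‖ < η → ‖F p‖ ≠ δ := by
  obtain ⟨ε₁, hε₁, hball₁⟩ := Metric.eventually_nhds_iff_ball.mp hsing
  obtain ⟨ε₂, hε₂, hball₂⟩ := Metric.isOpen_iff.mp hΩ 0 hΩ0
  set ε : ℝ := min ε₁ ε₂ with hε_def
  have hε : 0 < ε := lt_min hε₁ hε₂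
  have hsubΩ : Metric.closedBall (0 : (Fin n → 𝕜) × 𝕜) (ε/2) ⊆ Ω := by
    intro q hq
    apply hball₂
    rw [Metric.mem_ball]
    calc dist q 0 ≤ ε/2 := Metric.mem_closedBall.mp hq
      _ < ε := by linarith
      _ ≤ ε₂ := min_le_right _ _
  refine ⟨ε/2, by positivity, hsubΩ, ?_⟩
  intro r hr hrr δ hδ
  by_contra hcon
  push_neg at hcon
  choose p hp1 hp2 hp3 hp4 using fun k : ℕ =>
    hcon (1/(k+1 : ℝ)) (by positivity)
  obtain ⟨x, hxball, φ, hφ, hlim⟩ :=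
    (isCompact_closedBall (0 : (Fin n → 𝕜) × 𝕜) r).tendsto_subseq hp1
  have hxΩ : x ∈ Ω := hsubΩ (Metric.closedBall_subset_closedBall hrr hxball)
  have hxε₁ : x ∈ Metric.ball (0 : (Fin n → 𝕜) × 𝕜) ε₁ := by
    rw [Metric.mem_ball]
    calc dist x 0 ≤ r := Metric.mem_closedBall.mp hxball
      _ ≤ ε/2 := hrr
      _ < ε := by linarith
      _ ≤ ε₁ := min_le_left _ _
  -- x.2 = 0
  have hx2 : x.2 = 0 := by
    have h1 : Tendsto (fun k => ‖(p (φ k)).2‖) atTop (𝓝 ‖x.2‖) :=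
      ((continuous_snd.tendsto x).comp hlim).norm
    have h2 : Tendsto (fun k => ‖(p (φ k)).2‖) atTop (𝓝 0) := by
      apply squeeze_zero (fun k => norm_nonneg _) (fun k => ?_)
        tendsto_one_div_add_atTop_nhds_zero_nat
      calc ‖(p (φ k)).2‖ ≤ 1/(φ k + 1 : ℝ) := (hp3 (φ k)).le
        _ ≤ 1/(k + 1 : ℝ) := by
            apply one_div_le_one_div_of_le (by positivity)
            have hk : (k : ℝ) ≤ (φ k : ℝ) := Nat.cast_le.mpr hφ.le_apply
            linarith
    have : ‖x.2‖ = 0 := tendsto_nhds_unique h1 h2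
    simpa using this
  -- partials vanish at x
  have hDF : ContinuousAt (fderiv 𝕜 F) x := ((hF.fderiv) x hxΩ).continuousAt
  have hDx : ∀ i, fderiv 𝕜 F x (Pi.single i 1, 0) = 0 := by
    intro i
    have hev : Continuous fun L : ((Fin n → 𝕜) × 𝕜) →L[𝕜] 𝕜 =>
        L ((Pi.single i 1 : Fin n → 𝕜), (0 : 𝕜)) :=
      (ContinuousLinearMap.apply 𝕜 𝕜 ((Pi.single i 1 : Fin n → 𝕜), (0 : 𝕜))).continuous
    have h1 : Tendsto (fun k => fderiv 𝕜 F (p (φ k)) (Pi.single i 1, 0)) atTop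
        (𝓝 (fderiv 𝕜 F x (Pi.single i 1, 0))) :=
      (hev.tendsto _).comp (hDF.tendsto.comp hlim)
    have h2 : Tendsto (fun k => fderiv 𝕜 F (p (φ k)) (Pi.single i 1, 0)) atTop
        (𝓝 0) := by
      simp only [fun k => hp2 (φ k) i]
      exact tendsto_const_nhds
    exact tendsto_nhds_unique h1 h2
  -- ‖F x‖ = δ
  have hFx : ‖F x‖ = δ := by
    have h1 : Tendsto (fun k => ‖F (p (φ k))‖) atTop (𝓝 ‖F x‖) :=
      (((hF x hxΩ).continuousAt.tendsto).comp hlim).norm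
    have h2 : Tendsto (fun k => ‖F (p (φ k))‖) atTop (𝓝 δ) := by
      simp only [fun k => hp4 (φ k)]
      exact tendsto_const_nhds
    exact tendsto_nhds_unique h1 h2
  have hF0 : F x = 0 := hball₁ x hxε₁ ⟨hx2, hDx⟩
  rw [hF0, norm_zero] at hFx
  exact absurd hFx.symm (ne_of_gt hδ)
end

section
/- For F(x, y, z, t) = y² + x²(tz − x), the Milnor set condition for tameness fails: the set M(F̃) ∩ {t = 0} contains Sing F₀ = {x = 0, y = 0} (the z-axis), where along the z-axis points (0,0,z,0) with z ≠ 0 are limits of points in M(F̃) \ F̃^{-1}(Δ). -/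
open Filter Metric Set Topology

/-- For `F(x,y,z,t) = y² + x²(tz − x)`, tameness fails: every point
`(0,0,z₀,0)` of `Sing F₀ = {x = y = 0}` with `z₀ ≠ 0` is a limit of points of
`M(F̃) \ F̃⁻¹(Δ)`, i.e. of points `(x,y,z,t)` at which the gradient
`∇ₓF = (−3x² + 2txz, 2y, tx²)` is a nonzero multiple of the position vector `(x,y,z)`
and `F(x,y,z,t) ≠ 0` (here `Δ = F̃(Sing F̃) = {0} × ℝ`, so `F̃⁻¹(Δ) = F⁻¹(0)`). -/
theorem stmt_17 :
    ∀ z₀ : ℝ, z₀ ≠ 0 → ∀ ε > (0 : ℝ), ∃ x y z t : ℝ,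
      dist ((x, y, z, t) : ℝ × ℝ × ℝ × ℝ) ((0, 0, z₀, 0) : ℝ × ℝ × ℝ × ℝ) < ε ∧
      ((-3 * x ^ 2 + 2 * t * x * z, 2 * y, t * x ^ 2) : ℝ × ℝ × ℝ) ≠ (0, 0, 0) ∧
      (∃ lam : ℝ,
        -3 * x ^ 2 + 2 * t * x * z = lam * x ∧ 2 * y = lam * y ∧ t * x ^ 2 = lam * z) ∧
      y ^ 2 + x ^ 2 * (t * z - x) ≠ 0 := by
  intro z₀ hz₀ ε hε
  have hz : 0 < |z₀| := abs_pos.mpr hz₀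
  set x : ℝ := min (min (ε/2) (|z₀|/4)) (ε*|z₀|/4) with hx_def
  have hx : 0 < x := lt_min (lt_min (by linarith) (by linarith)) (by positivity)
  have hx1 : x ≤ ε/2 := le_trans (min_le_left _ _) (min_le_left _ _)
  have hx2 : x ≤ |z₀|/4 := le_trans (min_le_left _ _) (min_le_right _ _)
  have hx3 : x ≤ ε*|z₀|/4 := min_le_right _ _
  have hzsq : |z₀|^2 = z₀^2 := sq_abs z₀
  have hD : 0 < 2*z₀^2 - x^2 := by nlinarith
  set D : ℝ := 2*z₀^2 - x^2 with hD_def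
  set t : ℝ := 3*x*z₀/D with ht_def
  refine ⟨x, 0, z₀, t, ?_, ?_, ⟨-3*x + 2*t*z₀, by ring, by ring, ?_⟩, ?_⟩
  · -- distance bound
    have htb : |t| < ε := by
      rw [ht_def, abs_div, abs_of_pos hD]
      rw [div_lt_iff₀ hD]
      have : |3*x*z₀| = 3*x*|z₀| := by
        rw [abs_mul, abs_of_pos (by linarith : (0:ℝ) < 3*x)]
      rw [this]
      have h1 : x*|z₀| ≤ ε*z₀^2/4 := by nlinarith [mul_le_mul_of_nonneg_right hx3 hz.le]
      have h2 : ε*x^2 ≤ ε*z₀^2/16 := by nlinarith [mul_le_mul_of_nonneg_left (mul_le_mul hx2 hx2 hx.le (by positivity : (0:ℝ) ≤ |z₀|/4)) hε.le]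
      nlinarith [mul_pos hε (mul_pos hz hz)]
    simp only [Prod.dist_eq, Real.dist_eq, sub_zero, sub_self, abs_zero]
    have hxa : |x| < ε := by rw [abs_of_pos hx]; linarith
    simp only [max_lt_iff]
    exact ⟨hxa, hε, hε, htb⟩
  · -- gradient nonzero: third component t*x^2 ≠ 0
    have ht0 : t ≠ 0 := by
      rw [ht_def]
      apply div_ne_zero _ (ne_of_gt hD)
      intro h
      rcases mul_eq_zero.mp h with h' | h'
      · rcases mul_eq_zero.mp h' with h'' | h''
        · norm_num at h''
        · exact absurd h'' (ne_of_gt hx)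
      · exact hz₀ h'
    intro h
    have := congrArg (fun p : ℝ × ℝ × ℝ => p.2.2) h
    simp at this
    rcases this with h' | h'
    · exact ht0 h'
    · exact absurd h' (ne_of_gt hx)
  · -- t*x^2 = lam*z₀
    have hDne : D ≠ 0 := ne_of_gt hD
    rw [ht_def]
    field_simp
    ring
  · -- F ≠ 0
    have hDne : D ≠ 0 := ne_of_gt hD
    have htz : t*z₀ - x = x*(z₀^2 + x^2)/D := by
      rw [ht_def]; field_simp; ring
    have hpos : 0 < t*z₀ - x := by
      rw [htz]; positivity
    have : (0:ℝ) < 0^2 + x^2*(t*z₀ - x) := by positivity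
    exact ne_of_gt this
end
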